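/- arXiv:2212.02380 — 2 statements merged into one kernel-verified Lean document; each statement's English description precedes it below -/
import Mathlib

section
/- Let A = (Q, q₀, F, δ) be a graph-walking automaton with n states over a signature S = (D, −, Σ, Σ₀, (D_a)_{a∈Σ}) with k directions and m node labels. Then there exists a signature S' with k·4^n directions and at most m·4^{nk} node labels, together with an injective function f : L(A) → L(S') and a surjective function g : L(S') → L(A) satisfying g(f(G)) = G for all G ∈ L(A), such that whenever G' = f(G) or G = g(G'), the graphs G and G' have the same set of nodes, the same initial node, and the same edge structure (each edge connects the same pair of nodes; only node labels and direction labels differ). In particular, L(A) is non-empty if and only if L(S') is non-empty. -/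
/-- A signature `S = (D, −, Σ, Σ₀, (D_a)_{a∈Σ})`: a finite set `D` of directions with an
involution `neg`, a finite set `Lab` of node labels, a set `init ⊆ Lab` of initial labels,
and for each label `a` a set `Da a ⊆ D` of directions used at nodes labelled `a`. -/
structure Signature where
  D : Type
  [fintypeD : Fintype D]
  [decEqD : DecidableEq D]
  neg : D → D
  neg_neg : ∀ d, neg (neg d) = d
  Lab : Type
  [fintypeLab : Fintype Lab]
  [decEqLab : DecidableEq Lab]
  init : Finset Lab
  Da : Lab → Finset D

attribute [instance] Signature.fintypeD Signature.decEqD Signature.fintypeLab Signature.decEqLab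

/-- A (finite) graph over a signature `S`: nodes are `Fin n`, `v0` is the initial node,
`edge` is the partial function `+ : V × D ⇀ V`, and `lab` the labelling. -/
structure SigGraph (S : Signature) where
  n : ℕ
  v0 : Fin n
  edge : Fin n → S.D → Option (Fin n)
  lab : Fin n → S.Lab
  edge_sym : ∀ v d u, edge v d = some u → edge u (S.neg d) = some v
  edge_dom : ∀ v d, (edge v d).isSome ↔ d ∈ S.Da (lab v)
  init_iff : ∀ v, lab v ∈ S.init ↔ v = v0

/-- The neighbour of `v` in direction `d` (defined whenever `d ∈ D_{λ(v)}`). -/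
def SigGraph.nbr {S : Signature} (G : SigGraph S) (v : Fin G.n) (d : S.D)
    (h : d ∈ S.Da (G.lab v)) : Fin G.n :=
  (G.edge v d).get ((G.edge_dom v d).mpr h)

/-- The number of nodes of `G` labelled with `a`. -/
def SigGraph.numLab {S : Signature} (G : SigGraph S) (a : S.Lab) : ℕ :=
  (Finset.univ.filter fun v : Fin G.n => G.lab v = a).card

/-- Two graphs (over possibly different signatures) have the same set of nodes, the same
initial node and the same edge structure (each pair of nodes is connected by the same
number of edges); only node labels and direction labels may differ. -/
def SameSkeleton {S S' : Signature} (G : SigGraph S) (G' : SigGraph S') : Prop :=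
  ∃ h : G.n = G'.n,
    ((G.v0 : ℕ) = (G'.v0 : ℕ)) ∧
    ∀ u w : Fin G.n,
      (Finset.univ.filter fun d : S.D => G.edge u d = some w).card
        = (Finset.univ.filter fun d' : S'.D =>
            G'.edge (Fin.cast h u) d' = some (Fin.cast h w)).card

/-- A star automaton over `S`: a finite set of states `Q` and a finite set `T` of stars.
A star `(a, q, q₁, …, q_{|D_a|})` is encoded as a label `a`, a centre state `q`, and the
assignment `d ↦ q_d` of states to the rays, one for each direction `d ∈ D_a`. -/
structure StarAutomaton (S : Signature) where
  Q : Type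
  [fintypeQ : Fintype Q]
  [decEqQ : DecidableEq Q]
  T : Finset (Σ a : S.Lab, Q × ({d // d ∈ S.Da a} → Q))

attribute [instance] StarAutomaton.fintypeQ StarAutomaton.decEqQ

/-- A computation of a star automaton on a graph: a choice of states in all nodes such that
the star around every node belongs to `T`. -/
def StarAutomaton.IsComputation {S : Signature} (A : StarAutomaton S) (G : SigGraph S)
    (q : Fin G.n → A.Q) : Prop :=
  ∀ v : Fin G.n,
    (⟨G.lab v, (q v, fun d : {d // d ∈ S.Da (G.lab v)} => q (G.nbr v d.1 d.2))⟩ :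
        Σ a : S.Lab, A.Q × ({d // d ∈ S.Da a} → A.Q)) ∈ A.T

/-- A star automaton accepts a graph if it has at least one computation on it. -/
def StarAutomaton.Accepts {S : Signature} (A : StarAutomaton S) (G : SigGraph S) : Prop :=
  ∃ q : Fin G.n → A.Q, A.IsComputation G q

/-- A deterministic graph-walking automaton over `S`. -/
structure GWA (S : Signature) where
  Q : Type
  [fintypeQ : Fintype Q]
  [decEqQ : DecidableEq Q]
  q0 : Q
  F : Finset (Q × S.Lab)
  δ : Q × S.Lab → Option (Q × S.D)
  δ_not_F : ∀ q a p, δ (q, a) = some p → (q, a) ∉ F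
  δ_dir : ∀ q a p, δ (q, a) = some p → p.2 ∈ S.Da a

attribute [instance] GWA.fintypeQ GWA.decEqQ

/-- One step of a graph-walking automaton on a graph, as a relation on configurations. -/
def GWA.Step {S : Signature} (A : GWA S) (G : SigGraph S)
    (c c' : A.Q × Fin G.n) : Prop :=
  ∃ (q' : A.Q) (d : S.D) (h : d ∈ S.Da (G.lab c.2)),
    A.δ (c.1, G.lab c.2) = some (q', d) ∧ c' = (q', G.nbr c.2 d h)

/-- A graph-walking automaton accepts a graph if its (unique) computation from the initial
configuration reaches an accepting configuration. -/
def GWA.Accepts {S : Signature} (A : GWA S) (G : SigGraph S) : Prop :=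
  ∃ c : A.Q × Fin G.n,
    Relation.ReflTransGen (A.Step G) (A.q0, G.v0) c ∧ (c.1, G.lab c.2) ∈ A.F


namespace Stmt11Aux

open Relation

variable {C : Type*}

def NRel (next : C → Option C) (c c' : C) : Prop := next c = some c'

lemma nrel_det {next : C → Option C} {c a b : C} (h1 : NRel next c a) (h2 : NRel next c b) :
    a = b := by
  rw [NRel] at h1 h2; rw [h1] at h2; exact Option.some.inj h2

lemma reach_comparable {next : C → Option C} {a b c : C}
    (hab : ReflTransGen (NRel next) a b) (hac : ReflTransGen (NRel next) a c) :
    ReflTransGen (NRel next) b c ∨ ReflTransGen (NRel next) c b := by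
  induction hab with
  | refl => exact Or.inl hac
  | tail hx hstep ih =>
    rcases ih with h | h
    · rcases h.cases_head with rfl | ⟨y, hy, hyc⟩
      · exact Or.inr (ReflTransGen.single hstep)
      · exact Or.inl (by rwa [nrel_det hstep hy])
    · exact Or.inr (h.tail hstep)

lemma cyc_back {next : C → Option C} {c x : C} (hc : TransGen (NRel next) c c)
    (hx : ReflTransGen (NRel next) c x) : ReflTransGen (NRel next) x c := by
  induction hx with
  | refl => exact ReflTransGen.refl
  | tail hy hstep ih =>
    rcases ih.cases_head with rfl | ⟨z, hz, hzc⟩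
    · rcases TransGen.head'_iff.mp hc with ⟨z, hz, hzc⟩
      rwa [nrel_det hstep hz]
    · rwa [nrel_det hstep hz]

lemma stuck_end {next : C → Option C} {a b : C} (h : ReflTransGen (NRel next) a b)
    (ha : next a = none) : b = a := by
  rcases h.cases_head with rfl | ⟨y, hy, _⟩
  · rfl
  · rw [NRel, ha] at hy; exact absurd hy (by simp)

lemma no_cycle {next : C → Option C} {c0 cs x : C} (hcs : ReflTransGen (NRel next) c0 cs)
    (hstuck : next cs = none) (hx : ReflTransGen (NRel next) c0 x)
    (hcyc : TransGen (NRel next) x x) : False := by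
  have hxcs : ReflTransGen (NRel next) cs x := by
    rcases reach_comparable hx hcs with h | h
    · exact cyc_back hcyc h
    · exact h
  have := stuck_end hxcs hstuck
  subst this
  rcases TransGen.head'_iff.mp hcyc with ⟨z, hz, _⟩
  rw [NRel, hstuck] at hz; exact absurd hz (by simp)

lemma unique_stuck {next : C → Option C} {c0 cs c : C} (hcs : ReflTransGen (NRel next) c0 cs)
    (hstuck : next cs = none) (hc : ReflTransGen (NRel next) c0 c) (hcn : next c = none) :
    c = cs := by
  rcases reach_comparable hc hcs with h | h
  · exact (stuck_end h hcn).symm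
  · exact stuck_end h hstuck

lemma pred_unique_of_stuck {next : C → Option C} {c0 cs c1 c2 x : C}
    (hcs : ReflTransGen (NRel next) c0 cs) (hstuck : next cs = none)
    (h1 : ReflTransGen (NRel next) c0 c1) (h2 : ReflTransGen (NRel next) c0 c2)
    (r1 : next c1 = some x) (r2 : next c2 = some x) : c1 = c2 := by
  by_contra hne
  have key : ∀ a b : C, ReflTransGen (NRel next) c0 a → ReflTransGen (NRel next) a b →
      a ≠ b → next a = some x → next b = some x → False := by
    intro a b ha hab hne' ra rb
    rcases hab.cases_head with rfl | ⟨y, hy, hyb⟩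
    · exact hne' rfl
    · have hyx : y = x := nrel_det hy ra
      subst hyx
      have : TransGen (NRel next) y y := TransGen.tail' hyb rb
      exact no_cycle hcs hstuck (ha.tail ra) this
  rcases reach_comparable h1 h2 with h | h
  · exact key c1 c2 h1 h hne r1 r2
  · exact key c2 c1 h2 h (Ne.symm hne) r2 r1

lemma no_pred_start {next : C → Option C} {c0 cs c : C}
    (hcs : ReflTransGen (NRel next) c0 cs) (hstuck : next cs = none)
    (hc : ReflTransGen (NRel next) c0 c) (hr : next c = some c0) : False :=
  no_cycle hcs hstuck ReflTransGen.refl (TransGen.tail' hc hr)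

lemma exists_stuck [Fintype C] (next : C → Option C) (R : Set C) (c0 : C) (h0 : c0 ∈ R)
    (hclosed : ∀ c ∈ R, ∀ c', next c = some c' → c' ∈ R)
    (hpred : ∀ c1 ∈ R, ∀ c2 ∈ R, ∀ x, next c1 = some x → next c2 = some x → c1 = c2)
    (hnp : ∀ c ∈ R, next c ≠ some c0) :
    ∃ c, ReflTransGen (NRel next) c0 c ∧ c ∈ R ∧ next c = none := by
  by_contra hcon
  push_neg at hcon
  classical
  let T : ℕ → C := fun i => (fun c => (next c).getD c)^[i] c0
  have hT0 : T 0 = c0 := rfl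
  have hTs : ∀ i, T (i + 1) = (next (T i)).getD (T i) := by
    intro i
    simp only [T, Function.iterate_succ_apply']
  have main : ∀ i, ReflTransGen (NRel next) c0 (T i) ∧ T i ∈ R ∧
      next (T i) = some (T (i + 1)) := by
    intro i
    induction i with
    | zero =>
      refine ⟨ReflTransGen.refl, h0, ?_⟩
      rcases hns : next (T 0) with _ | z
      · exact absurd hns (hcon c0 ReflTransGen.refl h0)
      · rw [hTs 0, hns]; rfl
    | succ i ih =>
      obtain ⟨hr, hR, hs⟩ := ih
      have hr' : ReflTransGen (NRel next) c0 (T (i + 1)) := hr.tail hs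
      have hR' : T (i + 1) ∈ R := hclosed _ hR _ hs
      refine ⟨hr', hR', ?_⟩
      rcases hns : next (T (i + 1)) with _ | z
      · exact absurd hns (hcon _ hr' hR')
      · rw [hTs (i + 1), hns]; rfl
  obtain ⟨i, j, hij, hTeq⟩ : ∃ i j : Fin (Fintype.card C + 1), i ≠ j ∧ T i = T j := by
    obtain ⟨i, j, hij, h⟩ := Fintype.exists_ne_map_eq_of_card_lt
      (fun i : Fin (Fintype.card C + 1) => T i) (by simp)
    exact ⟨i, j, hij, h⟩
  -- wlog i < j
  obtain ⟨i, j, hlt, hTeq⟩ : ∃ i j : ℕ, i < j ∧ T i = T j := by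
    rcases lt_or_gt_of_ne hij with h | h
    · exact ⟨i, j, h, hTeq⟩
    · exact ⟨j, i, h, hTeq.symm⟩
  have back : ∀ s, s ≤ i → T (i - s) = T (j - s) := by
    intro s
    induction s with
    | zero => intro _; simpa using hTeq
    | succ s ih =>
      intro hs
      have hsi : s ≤ i := Nat.le_of_succ_le hs
      have h1 : i - s = (i - (s + 1)) + 1 := by omega
      have h2 : j - s = (j - (s + 1)) + 1 := by omega
      have e1 : next (T (i - (s + 1))) = some (T (i - s)) := by
        rw [h1]; exact (main _).2.2
      have e2 : next (T (j - (s + 1))) = some (T (j - s)) := by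
        rw [h2]; exact (main _).2.2
      rw [ih hsi] at e1
      have := hpred _ (main (i - (s+1))).2.1 _ (main (j - (s+1))).2.1 _ e1 e2
      exact this
  have hfin := back i le_rfl
  simp only [Nat.sub_self] at hfin
  have hji : j - i ≥ 1 := by omega
  have h2 : j - i = (j - i - 1) + 1 := by omega
  have e2 : next (T (j - i - 1)) = some (T (j - i)) := by
    rw [h2]; exact (main _).2.2
  rw [← hfin, hT0] at e2
  exact hnp _ (main (j - i - 1)).2.1 e2

end Stmt11Aux
section Concrete

open Relation Stmt11Aux

variable {S : Signature} (A : GWA S)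

/-- One deterministic step as a partial function on configurations. -/
def nextConf (G : SigGraph S) (c : A.Q × Fin G.n) : Option (A.Q × Fin G.n) :=
  (A.δ (c.1, G.lab c.2)).bind fun p => (G.edge c.2 p.2).map fun u => (p.1, u)

lemma step_iff_nrel {G : SigGraph S} {c c' : A.Q × Fin G.n} :
    A.Step G c c' ↔ NRel (nextConf A G) c c' := by
  constructor
  · rintro ⟨q', d, h, hδ, rfl⟩
    have he : G.edge c.2 d = some (G.nbr c.2 d h) := (Option.some_get _).symm
    rw [NRel, nextConf, hδ, Option.bind_some, he, Option.map_some]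
  · intro hn
    rw [NRel, nextConf] at hn
    rcases hδ : A.δ (c.1, G.lab c.2) with _ | p
    · rw [hδ] at hn; simp at hn
    · rw [hδ, Option.bind_some] at hn
      rcases he : G.edge c.2 p.2 with _ | u
      · rw [he] at hn; simp at hn
      · rw [he, Option.map_some] at hn
        have hd : p.2 ∈ S.Da (G.lab c.2) := A.δ_dir _ _ _ hδ
        refine ⟨p.1, p.2, hd, by rw [hδ], ?_⟩
        have : G.nbr c.2 p.2 hd = u := by
          simp only [SigGraph.nbr]
          simp [he]
        rw [this]; exact (Option.some.inj hn).symm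
 
lemma nextConf_eq_none_iff {G : SigGraph S} {c : A.Q × Fin G.n} :
    nextConf A G c = none ↔ A.δ (c.1, G.lab c.2) = none := by
  rcases hδ : A.δ (c.1, G.lab c.2) with _ | p
  · simp [nextConf, hδ]
  · have hd : p.2 ∈ S.Da (G.lab c.2) := A.δ_dir _ _ _ hδ
    have := (G.edge_dom c.2 p.2).mpr hd
    rcases he : G.edge c.2 p.2 with _ | u
    · rw [he] at this; simp at this
    · simp [nextConf, hδ, he]

lemma accepts_iff_nrel {G : SigGraph S} :
    A.Accepts G ↔ ∃ c : A.Q × Fin G.n,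
      ReflTransGen (NRel (nextConf A G)) (A.q0, G.v0) c ∧ (c.1, G.lab c.2) ∈ A.F := by
  constructor
  · rintro ⟨c, hr, hF⟩
    exact ⟨c, ReflTransGen.mono (fun a b h => (step_iff_nrel A).mp h) _ _ hr, hF⟩
  · rintro ⟨c, hr, hF⟩
    exact ⟨c, ReflTransGen.mono (fun a b h => (step_iff_nrel A).mpr h) _ _ hr, hF⟩

/-- Membership of a state in the set of states recorded at a node with decorated label `l`. -/
def memS (l : S.Lab × (S.D → Finset A.Q × Finset A.Q)) (q : A.Q) : Prop :=
  (∃ d ∈ S.Da l.1, q ∈ (l.2 d).2) ∨ (l.1 ∈ S.init ∧ q = A.q0)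

/-- Local consistency conditions on a decorated label which certify acceptance. -/
structure Good (l : S.Lab × (S.D → Finset A.Q × Finset A.Q)) : Prop where
  disj : ∀ d1 ∈ S.Da l.1, ∀ d2 ∈ S.Da l.1, ∀ q : A.Q,
    q ∈ (l.2 d1).2 → q ∈ (l.2 d2).2 → d1 = d2
  init_no : l.1 ∈ S.init → ∀ d ∈ S.Da l.1, A.q0 ∉ (l.2 d).2
  stuck_acc : ∀ q, memS A l q → A.δ (q, l.1) = none → (q, l.1) ∈ A.F
  out_eq : ∀ d ∈ S.Da l.1, ∀ q' : A.Q,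
    q' ∈ (l.2 d).1 ↔ ∃ q, memS A l q ∧ A.δ (q, l.1) = some (q', d)
  injd : ∀ q1 q2, memS A l q1 → memS A l q2 → ∀ p,
    A.δ (q1, l.1) = some p → A.δ (q2, l.1) = some p → q1 = q2

noncomputable instance goodFintype : Fintype {l : S.Lab × (S.D → Finset A.Q × Finset A.Q) // Good A l} :=
  @Subtype.fintype _ _ (Classical.decPred _) _

/-- The decorated signature. -/
@[reducible] noncomputable def Sig' : Signature where
  D := S.D × (Finset A.Q × Finset A.Q)
  fintypeD := inferInstance
  decEqD := inferInstance
  neg := fun e => (S.neg e.1, e.2.2, e.2.1)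
  neg_neg := by rintro ⟨d, X, Y⟩; simp [S.neg_neg]
  Lab := {l : S.Lab × (S.D → Finset A.Q × Finset A.Q) // Good A l}
  fintypeLab := goodFintype A
  decEqLab := inferInstance
  init := Finset.univ.filter fun l => l.1.1 ∈ S.init
  Da := fun l => (S.Da l.1.1).image fun d => (d, l.1.2 d)

lemma mem_Da' {l : (Sig' A).Lab} {e : (Sig' A).D} :
    e ∈ (Sig' A).Da l ↔ e.1 ∈ S.Da l.1.1 ∧ l.1.2 e.1 = e.2 := by
  show e ∈ (S.Da l.1.1).image _ ↔ _
  rw [Finset.mem_image]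
  constructor
  · rintro ⟨d, hd, he⟩
    rcases e with ⟨e1, e2⟩
    obtain ⟨rfl, rfl⟩ := Prod.mk.injEq .. ▸ he
    exact ⟨hd, rfl⟩
  · rintro ⟨h1, h2⟩
    exact ⟨e.1, h1, by rw [h2]⟩

lemma mem_init' {l : (Sig' A).Lab} : l ∈ (Sig' A).init ↔ l.1.1 ∈ S.init := by
  show l ∈ Finset.univ.filter _ ↔ _
  simp

end Concrete
section Decode

open Relation Stmt11Aux

variable {S : Signature} (A : GWA S)

lemma nextConf_eq_some_iff {G : SigGraph S} {c x : A.Q × Fin G.n} :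
    nextConf A G c = some x ↔
      ∃ d, A.δ (c.1, G.lab c.2) = some (x.1, d) ∧ G.edge c.2 d = some x.2 := by
  constructor
  · intro hn
    rw [nextConf] at hn
    rcases hδ : A.δ (c.1, G.lab c.2) with _ | p
    · rw [hδ] at hn; simp at hn
    · rw [hδ, Option.bind_some] at hn
      rcases he : G.edge c.2 p.2 with _ | u
      · rw [he] at hn; simp at hn
      · rw [he, Option.map_some] at hn
        obtain rfl := Option.some.inj hn
        exact ⟨p.2, rfl, he⟩
  · rintro ⟨d, hδ, he⟩
    rw [nextConf, hδ, Option.bind_some]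
    show Option.map _ (G.edge c.2 d) = some x
    rw [he, Option.map_some]

/-- Strip decorations from a graph over the decorated signature. -/
def decode (G' : SigGraph (Sig' A)) : SigGraph S where
  n := G'.n
  v0 := G'.v0
  edge := fun v d => G'.edge v (d, (G'.lab v).1.2 d)
  lab := fun v => (G'.lab v).1.1
  edge_sym := by
    intro v d u h
    have hs := G'.edge_sym _ _ _ h
    have hdom : ((Sig' A).neg (d, (G'.lab v).1.2 d)) ∈ (Sig' A).Da (G'.lab u) :=
      (G'.edge_dom _ _).mp (by rw [hs]; rfl)
    rw [mem_Da'] at hdom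
    show G'.edge u (S.neg d, (G'.lab u).1.2 (S.neg d)) = some v
    have : (G'.lab u).1.2 (S.neg d) = (((G'.lab v).1.2 d).2, ((G'.lab v).1.2 d).1) := hdom.2
    rw [this]
    exact hs
  edge_dom := by
    intro v d
    rw [G'.edge_dom, mem_Da']
    simp
  init_iff := by
    intro v
    rw [← mem_init' A, G'.init_iff]

lemma decode_edge_some (G' : SigGraph (Sig' A)) {v u : Fin G'.n} {d : S.D}
    (h : (decode A G').edge v d = some u) :
    (G'.lab u).1.2 (S.neg d) = (((G'.lab v).1.2 d).2, ((G'.lab v).1.2 d).1) ∧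
      (decode A G').edge u (S.neg d) = some v := by
  have hs := (decode A G').edge_sym _ _ _ h
  have h' : G'.edge v (d, (G'.lab v).1.2 d) = some u := h
  have hs' := G'.edge_sym _ _ _ h'
  have hdom : ((Sig' A).neg (d, (G'.lab v).1.2 d)) ∈ (Sig' A).Da (G'.lab u) :=
    (G'.edge_dom _ _).mp (by rw [hs']; rfl)
  rw [mem_Da'] at hdom
  exact ⟨hdom.2, hs⟩

lemma decode_edge_dir (G' : SigGraph (Sig' A)) {v u : Fin G'.n} {d : S.D}
    (h : (decode A G').edge v d = some u) : d ∈ S.Da (G'.lab v).1.1 :=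
  ((decode A G').edge_dom v d).mp (by rw [h]; rfl)

/-- The set of recorded configurations of a decorated graph. -/
def RecSet (G' : SigGraph (Sig' A)) : Set (A.Q × Fin (decode A G').n) :=
  fun c => memS A (G'.lab c.2).1 c.1

lemma decode_accepts (G' : SigGraph (Sig' A)) : A.Accepts (decode A G') := by
  set G := decode A G' with hG
  have h0 : (A.q0, G.v0) ∈ RecSet A G' := by
    refine Or.inr ⟨?_, rfl⟩
    exact (mem_init' A).mp ((G'.init_iff G.v0).mpr rfl)
  have hclosed : ∀ c ∈ RecSet A G', ∀ c', nextConf A G c = some c' → c' ∈ RecSet A G' := by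
    rintro ⟨q, v⟩ hc ⟨q', u⟩ hn
    obtain ⟨d, hδ, he⟩ := (nextConf_eq_some_iff A).mp hn
    obtain ⟨hswap, hback⟩ := decode_edge_some A G' he
    have hd : d ∈ S.Da (G'.lab v).1.1 := decode_edge_dir A G' he
    have hout : q' ∈ ((G'.lab v).1.2 d).1 :=
      ((G'.lab v).2.out_eq d hd q').mpr ⟨q, hc, hδ⟩
    refine Or.inl ⟨S.neg d, decode_edge_dir A G' hback, ?_⟩
    rw [hswap]
    exact hout
  have hpred : ∀ c1 ∈ RecSet A G', ∀ c2 ∈ RecSet A G', ∀ x,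
      nextConf A G c1 = some x → nextConf A G c2 = some x → c1 = c2 := by
    rintro ⟨p1, u1⟩ h1 ⟨p2, u2⟩ h2 ⟨q, v⟩ hn1 hn2
    obtain ⟨d1, hδ1, he1⟩ := (nextConf_eq_some_iff A).mp hn1
    obtain ⟨d2, hδ2, he2⟩ := (nextConf_eq_some_iff A).mp hn2
    obtain ⟨hswap1, hback1⟩ := decode_edge_some A G' he1
    obtain ⟨hswap2, hback2⟩ := decode_edge_some A G' he2
    have hd1 : d1 ∈ S.Da (G'.lab u1).1.1 := decode_edge_dir A G' he1
    have hd2 : d2 ∈ S.Da (G'.lab u2).1.1 := decode_edge_dir A G' he2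
    have hout1 : q ∈ ((G'.lab v).1.2 (S.neg d1)).2 := by
      rw [hswap1]
      exact ((G'.lab u1).2.out_eq d1 hd1 q).mpr ⟨p1, h1, hδ1⟩
    have hout2 : q ∈ ((G'.lab v).1.2 (S.neg d2)).2 := by
      rw [hswap2]
      exact ((G'.lab u2).2.out_eq d2 hd2 q).mpr ⟨p2, h2, hδ2⟩
    have hnegeq : S.neg d1 = S.neg d2 :=
      (G'.lab v).2.disj (S.neg d1) (decode_edge_dir A G' hback1)
        (S.neg d2) (decode_edge_dir A G' hback2) q hout1 hout2
    have hdeq : d1 = d2 := by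
      have := congrArg S.neg hnegeq
      rwa [S.neg_neg, S.neg_neg] at this
    subst hdeq
    have hueq : u1 = u2 := by
      rw [hback1] at hback2
      exact Option.some.inj hback2
    subst hueq
    have hpeq : p1 = p2 :=
      (G'.lab u1).2.injd p1 p2 h1 h2 (q, d1) hδ1 hδ2
    rw [hpeq]
  have hnp : ∀ c ∈ RecSet A G', nextConf A G c ≠ some (A.q0, G.v0) := by
    rintro ⟨p, u⟩ hc hn
    obtain ⟨d, hδ, he⟩ := (nextConf_eq_some_iff A).mp hn
    obtain ⟨hswap, hback⟩ := decode_edge_some A G' he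
    have hd : d ∈ S.Da (G'.lab u).1.1 := decode_edge_dir A G' he
    have hout : A.q0 ∈ ((G'.lab G.v0).1.2 (S.neg d)).2 := by
      rw [hswap]
      exact ((G'.lab u).2.out_eq d hd A.q0).mpr ⟨p, hc, hδ⟩
    have hinit : (G'.lab G.v0).1.1 ∈ S.init := (mem_init' A).mp ((G'.init_iff G.v0).mpr rfl)
    exact (G'.lab G.v0).2.init_no hinit (S.neg d) (decode_edge_dir A G' hback) hout
  obtain ⟨c, hreach, hcR, hstuck⟩ :=
    exists_stuck (nextConf A G) (RecSet A G') _ h0 hclosed hpred hnp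
  rw [accepts_iff_nrel]
  exact ⟨c, hreach, (G'.lab c.2).2.stuck_acc c.1 hcR ((nextConf_eq_none_iff A).mp hstuck)⟩

end Decode
section Encode

open Relation Stmt11Aux

variable {S : Signature} (A : GWA S)

/-- Reachability of a configuration in the computation of `A` on `G`. -/
def ReachC (G : SigGraph S) (c : A.Q × Fin G.n) : Prop :=
  ReflTransGen (NRel (nextConf A G)) (A.q0, G.v0) c

/-- The set of states in which the computation leaves node `v` in direction `d`. -/
noncomputable def OutS (G : SigGraph S) (v : Fin G.n) (d : S.D) : Finset A.Q :=
  @Finset.filter _ (fun q' => ∃ q, ReachC A G (q, v) ∧ A.δ (q, G.lab v) = some (q', d))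
    (Classical.decPred _) Finset.univ

/-- The set of states in which the computation arrives at node `v` through the edge in
direction `d`. -/
noncomputable def InS (G : SigGraph S) (v : Fin G.n) (d : S.D) : Finset A.Q :=
  @Finset.filter _ (fun q' => ∃ u, G.edge v d = some u ∧
      ∃ q, ReachC A G (q, u) ∧ A.δ (q, G.lab u) = some (q', S.neg d))
    (Classical.decPred _) Finset.univ

lemma mem_OutS {G : SigGraph S} {v : Fin G.n} {d : S.D} {q' : A.Q} :
    q' ∈ OutS A G v d ↔ ∃ q, ReachC A G (q, v) ∧ A.δ (q, G.lab v) = some (q', d) := by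
  rw [OutS]
  rw [@Finset.mem_filter _ _ (Classical.decPred _) _ _]
  simp only [Finset.mem_univ, true_and]

lemma mem_InS {G : SigGraph S} {v : Fin G.n} {d : S.D} {q' : A.Q} :
    q' ∈ InS A G v d ↔ ∃ u, G.edge v d = some u ∧
      ∃ q, ReachC A G (q, u) ∧ A.δ (q, G.lab u) = some (q', S.neg d) := by
  rw [InS]
  rw [@Finset.mem_filter _ _ (Classical.decPred _) _ _]
  simp only [Finset.mem_univ, true_and]

lemma InS_eq {G : SigGraph S} {v u : Fin G.n} {d : S.D} (h : G.edge v d = some u) :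
    InS A G v d = OutS A G u (S.neg d) := by
  ext q'
  rw [mem_InS, mem_OutS]
  constructor
  · rintro ⟨w, hw, hq⟩
    rw [h] at hw
    obtain rfl := Option.some.inj hw
    exact hq
  · intro hq
    exact ⟨u, h, hq⟩

/-- The decorated label of a node. -/
noncomputable def labFun (G : SigGraph S) (v : Fin G.n) :
    S.Lab × (S.D → Finset A.Q × Finset A.Q) :=
  (G.lab v, fun d => (OutS A G v d, InS A G v d))

lemma memS_labFun_iff {G : SigGraph S} {v : Fin G.n} {q : A.Q} :
    memS A (labFun A G v) q ↔ ReachC A G (q, v) := by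
  constructor
  · rintro (⟨d, hd, hq⟩ | ⟨hinit, rfl⟩)
    · -- arrived through an edge
      have hq' : q ∈ InS A G v d := hq
      rw [mem_InS] at hq'
      obtain ⟨u, hu, p, hp, hδ⟩ := hq'
      have hback : G.edge u (S.neg d) = some v := G.edge_sym _ _ _ hu
      refine hp.tail ?_
      rw [NRel, nextConf_eq_some_iff]
      exact ⟨S.neg d, hδ, hback⟩
    · have : v = G.v0 := (G.init_iff v).mp hinit
      rw [this]
      exact ReflTransGen.refl
  · intro hr
    rcases hr.cases_tail with h | ⟨⟨p, u⟩, hp, hstep⟩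
    · obtain ⟨h1, h2⟩ := Prod.mk.injEq .. ▸ h
      right
      exact ⟨by rw [h2]; exact (G.init_iff G.v0).mpr rfl, h1⟩
    · rw [NRel, nextConf_eq_some_iff] at hstep
      obtain ⟨d, hδ, he⟩ := hstep
      left
      have hback : G.edge v (S.neg d) = some u := G.edge_sym _ _ _ he
      refine ⟨S.neg d, (G.edge_dom _ _).mp (by rw [hback]; rfl), ?_⟩
      show q ∈ InS A G v (S.neg d)
      rw [mem_InS]
      refine ⟨u, hback, p, hp, ?_⟩
      rw [S.neg_neg]
      exact hδ

lemma good_labFun {G : SigGraph S} (hacc : A.Accepts G) (v : Fin G.n) :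
    Good A (labFun A G v) := by
  obtain ⟨cs, hcs, hF⟩ := (accepts_iff_nrel A).mp hacc
  have hstuck : nextConf A G cs = none := by
    rw [nextConf_eq_none_iff]
    rcases hδ : A.δ (cs.1, G.lab cs.2) with _ | p
    · rfl
    · exact absurd hF (A.δ_not_F _ _ _ hδ)
  constructor
  · -- disj
    intro d1 hd1 d2 hd2 q hq1 hq2
    have h1 : q ∈ InS A G v d1 := hq1
    have h2 : q ∈ InS A G v d2 := hq2
    rw [mem_InS] at h1 h2
    obtain ⟨u1, hu1, p1, hp1, hδ1⟩ := h1
    obtain ⟨u2, hu2, p2, hp2, hδ2⟩ := h2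
    have hs1 : nextConf A G (p1, u1) = some (q, v) := by
      rw [nextConf_eq_some_iff]
      exact ⟨S.neg d1, hδ1, G.edge_sym _ _ _ hu1⟩
    have hs2 : nextConf A G (p2, u2) = some (q, v) := by
      rw [nextConf_eq_some_iff]
      exact ⟨S.neg d2, hδ2, G.edge_sym _ _ _ hu2⟩
    have heq := pred_unique_of_stuck hcs hstuck hp1 hp2 hs1 hs2
    obtain ⟨hpeq, hueq⟩ := Prod.mk.injEq .. ▸ heq
    rw [hpeq, hueq] at hδ1
    rw [hδ1] at hδ2
    have := Option.some.inj hδ2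
    have hne : S.neg d1 = S.neg d2 := (Prod.mk.injEq .. ▸ this).2
    have := congrArg S.neg hne
    rwa [S.neg_neg, S.neg_neg] at this
  · -- init_no
    intro hinit d _ hq
    have hv : v = G.v0 := (G.init_iff v).mp hinit
    have h1 : A.q0 ∈ InS A G v d := hq
    rw [mem_InS] at h1
    obtain ⟨u, hu, p, hp, hδ⟩ := h1
    have hs : nextConf A G (p, u) = some (A.q0, G.v0) := by
      rw [nextConf_eq_some_iff]
      refine ⟨S.neg d, hδ, ?_⟩
      rw [← hv]
      exact G.edge_sym _ _ _ hu
    exact no_pred_start hcs hstuck hp hs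
  · -- stuck_acc
    intro q hq hδ
    have hr : ReachC A G (q, v) := (memS_labFun_iff A).mp hq
    have hqn : nextConf A G (q, v) = none := by
      rw [nextConf_eq_none_iff]; exact hδ
    have := unique_stuck hcs hstuck hr hqn
    rw [← this] at hF
    exact hF
  · -- out_eq
    intro d _ q'
    show q' ∈ OutS A G v d ↔ _
    rw [mem_OutS]
    constructor
    · rintro ⟨q, hq, hδ⟩
      exact ⟨q, (memS_labFun_iff A).mpr hq, hδ⟩
    · rintro ⟨q, hq, hδ⟩
      exact ⟨q, (memS_labFun_iff A).mp hq, hδ⟩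
  · -- injd
    intro q1 q2 h1 h2 p hδ1 hδ2
    have hr1 : ReachC A G (q1, v) := (memS_labFun_iff A).mp h1
    have hr2 : ReachC A G (q2, v) := (memS_labFun_iff A).mp h2
    have hd : p.2 ∈ S.Da (G.lab v) := A.δ_dir _ _ _ hδ1
    have he : G.edge v p.2 = some (G.nbr v p.2 hd) := (Option.some_get _).symm
    have hs1 : nextConf A G (q1, v) = some (p.1, G.nbr v p.2 hd) := by
      rw [nextConf_eq_some_iff]
      exact ⟨p.2, hδ1, he⟩
    have hs2 : nextConf A G (q2, v) = some (p.1, G.nbr v p.2 hd) := by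
      rw [nextConf_eq_some_iff]
      exact ⟨p.2, hδ2, he⟩
    have := pred_unique_of_stuck hcs hstuck hr1 hr2 hs1 hs2
    exact (Prod.mk.injEq .. ▸ this).1

/-- Decorate an accepted graph with the data of its accepting computation. -/
noncomputable def encode (G : SigGraph S) (hacc : A.Accepts G) : SigGraph (Sig' A) where
  n := G.n
  v0 := G.v0
  edge := fun v e => if e.2 = (labFun A G v).2 e.1 then G.edge v e.1 else none
  lab := fun v => ⟨labFun A G v, good_labFun A hacc v⟩
  edge_sym := by
    rintro v ⟨d, X, Y⟩ u h
    have h' : (if (X, Y) = (labFun A G v).2 d then G.edge v d else none) = some u := h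
    have hcond : (X, Y) = (labFun A G v).2 d := by
      by_contra hne
      rw [if_neg hne] at h'
      exact absurd h' (by simp)
    rw [if_pos hcond] at h'
    obtain ⟨hX, hY⟩ := Prod.mk.injEq .. ▸ hcond
    have hsym : G.edge u (S.neg d) = some v := G.edge_sym _ _ _ h'
    show (if (Y, X) = (labFun A G u).2 (S.neg d) then G.edge u (S.neg d) else none) = some v
    have h1 : Y = OutS A G u (S.neg d) := by
      rw [hY]
      show InS A G v d = _
      exact InS_eq A h'
    have h2 : X = InS A G u (S.neg d) := by
      rw [hX]
      show OutS A G v d = _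
      rw [InS_eq A hsym, S.neg_neg]
    rw [if_pos (by rw [h1, h2]; rfl)]
    exact hsym
  edge_dom := by
    rintro v ⟨d, X, Y⟩
    rw [mem_Da']
    show (if (X, Y) = (labFun A G v).2 d then G.edge v d else none).isSome ↔
      d ∈ S.Da (G.lab v) ∧ (labFun A G v).2 d = (X, Y)
    by_cases hc : (X, Y) = (labFun A G v).2 d
    · rw [if_pos hc, G.edge_dom]
      exact ⟨fun h => ⟨h, hc.symm⟩, fun h => h.1⟩
    · rw [if_neg hc]
      simp only [Option.isSome_none, Bool.false_eq_true, false_iff]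
      rintro ⟨-, h⟩
      exact hc h.symm
  init_iff := by
    intro v
    rw [mem_init']
    exact G.init_iff v

lemma sigGraphExt {T : Signature} {G H : SigGraph T} (hn : G.n = H.n)
    (hv : HEq G.v0 H.v0) (he : HEq G.edge H.edge) (hl : HEq G.lab H.lab) : G = H := by
  rcases G with ⟨n1, w1, e1, l1, p1, p2, p3⟩
  rcases H with ⟨n2, w2, e2, l2, r1, r2, r3⟩
  dsimp at hn
  subst hn
  dsimp at hv he hl
  cases eq_of_heq hv
  cases eq_of_heq he
  cases eq_of_heq hl
  rfl

lemma decode_encode (G : SigGraph S) (hacc : A.Accepts G) :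
    decode A (encode A G hacc) = G := by
  refine sigGraphExt rfl (heq_of_eq rfl) (heq_of_eq ?_) (heq_of_eq rfl)
  funext v d
  show (if ((labFun A G v).2 d) = (labFun A G v).2 d then G.edge v d else none) = G.edge v d
  rw [if_pos rfl]

end Encode
section Final

open Relation Stmt11Aux

variable {S : Signature} (A : GWA S)

lemma card_D' : Fintype.card (Sig' A).D = Fintype.card S.D * 4 ^ Fintype.card A.Q := by
  have h : Fintype.card (Sig' A).D = Fintype.card (S.D × (Finset A.Q × Finset A.Q)) :=
    Fintype.card_congr (Equiv.refl _)
  rw [h, Fintype.card_prod, Fintype.card_prod, Fintype.card_finset, ← mul_pow]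
  norm_num

lemma card_Lab' : Fintype.card (Sig' A).Lab ≤
    Fintype.card S.Lab * 4 ^ (Fintype.card A.Q * Fintype.card S.D) := by
  have h1 : Fintype.card (Sig' A).Lab ≤
      Fintype.card (S.Lab × (S.D → Finset A.Q × Finset A.Q)) :=
    Fintype.card_le_of_injective Subtype.val Subtype.val_injective
  refine h1.trans ?_
  rw [Fintype.card_prod, Fintype.card_fun, Fintype.card_prod, Fintype.card_finset, ← mul_pow]
  norm_num [← pow_mul]

noncomputable def fmap : {G : SigGraph S // A.Accepts G} → SigGraph (Sig' A) :=
  fun G => encode A G.1 G.2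

noncomputable def gmap (G' : SigGraph (Sig' A)) : {G : SigGraph S // A.Accepts G} :=
  ⟨decode A G', decode_accepts A G'⟩

lemma gmap_fmap : ∀ G, gmap A (fmap A G) = G :=
  fun G => Subtype.ext (decode_encode A G.1 G.2)

lemma skel_encode (G : SigGraph S) (hacc : A.Accepts G) :
    SameSkeleton G (encode A G hacc) := by
  refine ⟨rfl, rfl, ?_⟩
  intro u w
  refine Finset.card_bij (fun d _ => ((d, (labFun A G u).2 d) : (Sig' A).D)) ?_ ?_ ?_
  · intro d hd
    rw [Finset.mem_filter] at hd ⊢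
    refine ⟨Finset.mem_univ _, ?_⟩
    show (if ((labFun A G u).2 d) = (labFun A G u).2 d then G.edge u d else none) = some w
    rw [if_pos rfl]
    exact hd.2
  · intro d1 _ d2 _ heq
    exact congrArg Prod.fst heq
  · rintro ⟨d, X, Y⟩ he
    rw [Finset.mem_filter] at he
    have h' : (if (X, Y) = (labFun A G u).2 d then G.edge u d else none) = some w := he.2
    have hcond : (X, Y) = (labFun A G u).2 d := by
      by_contra hne
      rw [if_neg hne] at h'
      exact absurd h' (by simp)
    rw [if_pos hcond] at h'
    refine ⟨d, ?_, ?_⟩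
    · rw [Finset.mem_filter]
      exact ⟨Finset.mem_univ _, h'⟩
    · rw [hcond]
  
lemma skel_decode (G' : SigGraph (Sig' A)) : SameSkeleton (decode A G') G' := by
  refine ⟨rfl, rfl, ?_⟩
  intro u w
  refine Finset.card_bij (fun d _ => ((d, (G'.lab u).1.2 d) : (Sig' A).D)) ?_ ?_ ?_
  · intro d hd
    rw [Finset.mem_filter] at hd ⊢
    exact ⟨Finset.mem_univ _, hd.2⟩
  · intro d1 _ d2 _ heq
    exact congrArg Prod.fst heq
  · intro e he
    rw [Finset.mem_filter] at he
    have he2 : G'.edge u e = some w := he.2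
    have hdom : e ∈ (Sig' A).Da (G'.lab u) := (G'.edge_dom u e).mp (by rw [he2]; rfl)
    rw [mem_Da'] at hdom
    refine ⟨e.1, ?_, ?_⟩
    · rw [Finset.mem_filter]
      refine ⟨Finset.mem_univ _, ?_⟩
      show G'.edge u (e.1, (G'.lab u).1.2 e.1) = some w
      rw [hdom.2]
      rcases e with ⟨e1, e2⟩
      exact he2
    · show ((e.1, (G'.lab u).1.2 e.1) : (Sig' A).D) = e
      rw [hdom.2]

end Final

/-- Reduction of a graph-walking automaton to a signature: for a GWA `A` with `n` states
over a signature `S` with `k` directions and `m` node labels, there is a signature `S'`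
with `k·4^n` directions and at most `m·4^(nk)` node labels, an injection `f` from the
graphs accepted by `A` to the graphs over `S'` and a surjection `g` in the other direction
with `g (f G) = G`, preserving nodes, initial node and edge structure; in particular,
`A` accepts some graph iff some graph over `S'` exists. -/
theorem stmt11 (S : Signature) (A : GWA S) (n k m : ℕ)
    (hn : Fintype.card A.Q = n) (hk : Fintype.card S.D = k)
    (hm : Fintype.card S.Lab = m) :
    ∃ S' : Signature,
      Fintype.card S'.D = k * 4 ^ n ∧
      Fintype.card S'.Lab ≤ m * 4 ^ (n * k) ∧
      ∃ (f : {G : SigGraph S // A.Accepts G} → SigGraph S')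
        (g : SigGraph S' → {G : SigGraph S // A.Accepts G}),
        Function.Injective f ∧
        Function.Surjective g ∧
        (∀ G, g (f G) = G) ∧
        (∀ G, SameSkeleton G.1 (f G)) ∧
        (∀ G', SameSkeleton (g G').1 G') ∧
        (Nonempty {G : SigGraph S // A.Accepts G} ↔ Nonempty (SigGraph S')) := by
  subst hn hk hm
  refine ⟨Sig' A, card_D' A, card_Lab' A, fmap A, gmap A, ?_, ?_, gmap_fmap A, ?_, ?_, ?_⟩
  · intro a b h
    have := congrArg (gmap A) h
    rwa [gmap_fmap, gmap_fmap] at this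
  · intro G
    exact ⟨fmap A G, gmap_fmap A G⟩
  · intro G
    exact skel_encode A G.1 G.2
  · intro G'
    exact skel_decode A G'
  · exact ⟨fun ⟨G⟩ => ⟨fmap A G⟩, fun ⟨G'⟩ => ⟨gmap A G'⟩⟩
end

section
/- For every finite connected undirected graph G = (V, E) with at least one vertex, there exists a signature S_G, with 3|V| + 6|E| node labels and 12|E| directions, such that there exists at least one graph over the signature S_G if and only if G admits a proper 3-colouring, that is, a function c : V → {1, 2, 3} such that c(u) ≠ c(v) for every edge (u, v) ∈ E. -/
namespace Stmt13
open Finset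

variable {V : Type} [Fintype V] [DecidableEq V] (G : SimpleGraph V) [DecidableRel G.Adj]
variable (ι : V ≃ Fin (Fintype.card V))

abbrev OE := {p : V × V // G.Adj p.1 p.2 ∧ ι p.1 < ι p.2}

abbrev CP := {p : Fin 3 × Fin 3 // p.1 ≠ p.2}

abbrev Dir := OE G ι × Bool × Fin 3 × Bool

abbrev Lab := (V × Fin 3) ⊕ (OE G ι × CP)

variable {G ι}

/-- endpoint of an oriented edge on side `s` -/
def ep (e : OE G ι) (s : Bool) : V := if s then e.1.2 else e.1.1

/-- colour of a colour pair on side `s` -/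
def scol (p : CP) (s : Bool) : Fin 3 := if s then p.1.2 else p.1.1

lemma scol_ne (p : CP) (s : Bool) : scol p (!s) ≠ scol p s := by
  cases s
  · simpa [scol] using Ne.symm p.2
  · simpa [scol] using p.2

variable (G ι) in
def Da : Lab G ι → Finset (Dir G ι)
  | .inl (w, c) => univ.filter fun d => d.2.2.2 = false ∧ d.2.2.1 = c ∧ ep d.1 d.2.1 = w
  | .inr (e, p) => {(e, false, p.1.1, true), (e, true, p.1.2, true)}

lemma mem_Da_inl {e : OE G ι} {s a io w c} :
    ((e,s,a,io) : Dir G ι) ∈ Da G ι (.inl (w,c)) ↔ io = false ∧ a = c ∧ ep e s = w := by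
  simp [Da]

lemma mem_Da_inr {e' e : OE G ι} {s a io p} :
    ((e',s,a,io) : Dir G ι) ∈ Da G ι (.inr (e,p)) ↔ e' = e ∧ io = true ∧ a = scol p s := by
  cases s <;> simp [Da, scol, Prod.ext_iff] <;> aesop

lemma lab_of_mem_false {l} {e : OE G ι} {s a}
    (h : ((e,s,a,false) : Dir G ι) ∈ Da G ι l) : l = .inl (ep e s, a) := by
  rcases l with ⟨w, c⟩ | ⟨e0, p⟩
  · rw [mem_Da_inl] at h
    rw [h.2.1, h.2.2]
  · rw [mem_Da_inr] at h
    exact absurd h.2.1 (by simp)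

lemma lab_of_mem_true {l} {e : OE G ι} {s a}
    (h : ((e,s,a,true) : Dir G ι) ∈ Da G ι l) : ∃ p, l = .inr (e,p) ∧ a = scol p s := by
  rcases l with ⟨w, c⟩ | ⟨e0, p⟩
  · rw [mem_Da_inl] at h
    exact absurd h.1 (by simp)
  · rw [mem_Da_inr] at h
    exact ⟨p, by rw [h.1], h.2.2⟩

variable (G ι) in
def sig (v₀ : V) : Signature where
  D := Dir G ι
  neg := fun d => (d.1, d.2.1, d.2.2.1, !d.2.2.2)
  neg_neg := by rintro ⟨e,s,a,io⟩; simp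
  Lab := Lab G ι
  init := (univ : Finset (Fin 3)).image fun c => .inl (v₀, c)
  Da := Da G ι

@[simp] lemma sig_Da (v₀ : V) : (sig G ι v₀).Da = Da G ι := rfl
@[simp] lemma sig_neg (v₀ : V) (e : OE G ι) (s a io) :
    (sig G ι v₀).neg (e,s,a,io) = (e,s,a,!io) := rfl

lemma mem_init {v₀ : V} {l : Lab G ι} :
    l ∈ (sig G ι v₀).init ↔ ∃ a, l = .inl (v₀, a) := by
  show l ∈ (univ : Finset (Fin 3)).image (fun c => (Sum.inl (v₀, c) : Lab G ι)) ↔ _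
  simp [eq_comm]

lemma card_OE : Fintype.card (OE G ι) = G.edgeFinset.card := by
  rw [Fintype.card_subtype]
  refine Finset.card_bij (fun p _ => Sym2.mk p.1 p.2) ?_ ?_ ?_
  · rintro ⟨u, v⟩ hp
    simp only [mem_filter] at hp
    simpa [SimpleGraph.mem_edgeFinset] using hp.2.1
  · rintro ⟨u₁, v₁⟩ h₁ ⟨u₂, v₂⟩ h₂ h
    simp only [mem_filter, mem_univ, true_and] at h₁ h₂
    rw [Sym2.mk_eq_mk_iff] at h
    rcases h with h | h
    · exact h
    · rw [Prod.swap_prod_mk, Prod.mk.injEq] at h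
      exfalso
      rcases h with ⟨rfl, rfl⟩
      exact absurd (h₁.2.trans h₂.2) (lt_irrefl _)
  · intro e he
    induction e with
    | _ u v =>
      simp only [SimpleGraph.mem_edgeFinset, SimpleGraph.mem_edgeSet] at he
      have hne : ι u ≠ ι v := fun h => he.ne (ι.injective h)
      rcases lt_or_gt_of_ne hne with h | h
      · exact ⟨(u, v), by simp [he, h], rfl⟩
      · exact ⟨(v, u), by simp [he.symm, h], Sym2.eq_swap⟩

lemma card_D (v₀ : V) : Fintype.card (sig G ι v₀).D = 12 * G.edgeFinset.card := by
  show Fintype.card (Dir G ι) = _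
  rw [Fintype.card_prod, Fintype.card_prod, Fintype.card_prod, card_OE, Fintype.card_bool,
    Fintype.card_fin]
  ring

lemma card_Lab (v₀ : V) :
    Fintype.card (sig G ι v₀).Lab = 3 * Fintype.card V + 6 * G.edgeFinset.card := by
  show Fintype.card (Lab G ι) = _
  have hcp : Fintype.card CP = 6 := by decide
  rw [Fintype.card_sum, Fintype.card_prod, Fintype.card_prod, card_OE, hcp, Fintype.card_fin]
  ring


/-! ### From a colouring to a graph over the signature -/

variable (G ι) in
abbrev Nd := V ⊕ OE G ι

variable (G ι) in
def labN (c : V → Fin 3) (hc : ∀ u v, G.Adj u v → c u ≠ c v) : Nd G ι → Lab G ι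
  | .inl v => .inl (v, c v)
  | .inr e => .inr (e, ⟨(c e.1.1, c e.1.2), hc _ _ e.2.1⟩)

variable (G ι) in
def targetN : Nd G ι → Dir G ι → Nd G ι
  | .inl _, d => .inr d.1
  | .inr e, d => .inl (ep e d.2.1)

variable (G ι) in
def edgeN (c : V → Fin 3) (hc : ∀ u v, G.Adj u v → c u ≠ c v) (x : Nd G ι) (d : Dir G ι) :
    Option (Nd G ι) :=
  if d ∈ Da G ι (labN G ι c hc x) then some (targetN G ι x d) else none

lemma scol_labp {c : V → Fin 3} {e : OE G ι} (h : c e.1.1 ≠ c e.1.2) (s : Bool) :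
    scol ⟨(c e.1.1, c e.1.2), h⟩ s = c (ep e s) := by
  cases s <;> rfl

lemma edgeN_dom {c hc} (x : Nd G ι) (d : Dir G ι) :
    (edgeN G ι c hc x d).isSome ↔ d ∈ Da G ι (labN G ι c hc x) := by
  unfold edgeN
  split <;> simp_all

lemma edgeN_sym {c hc} {x : Nd G ι} {d : Dir G ι} {y : Nd G ι}
    (h : edgeN G ι c hc x d = some y) :
    edgeN G ι c hc y (d.1, d.2.1, d.2.2.1, !d.2.2.2) = some x := by
  obtain ⟨e, s, a, io⟩ := d
  unfold edgeN at h ⊢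
  split at h
  case isFalse => exact absurd h (by simp)
  case isTrue hmem =>
    obtain rfl : targetN G ι x (e, s, a, io) = y := by injection h
    cases x with
    | inl v =>
      rw [labN] at hmem
      rw [mem_Da_inl] at hmem
      obtain ⟨rfl, rfl, hep⟩ := hmem
      have hmem2 : ((e, s, c v, !false) : Dir G ι) ∈
          Da G ι (labN G ι c hc (targetN G ι (.inl v) (e, s, c v, false))) := by
        rw [targetN, labN, mem_Da_inr]
        refine ⟨rfl, rfl, ?_⟩
        rw [scol_labp, hep]
      rw [if_pos hmem2]
      rw [targetN, targetN, ep] at *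
      rw [hep]
    | inr e0 =>
      rw [labN] at hmem
      rw [mem_Da_inr] at hmem
      obtain ⟨rfl, rfl, ha⟩ := hmem
      rw [scol_labp] at ha
      have hmem2 : ((e, s, a, !true) : Dir G ι) ∈
          Da G ι (labN G ι c hc (targetN G ι (.inr e) (e, s, a, true))) := by
        rw [targetN, labN, mem_Da_inl]
        exact ⟨rfl, ha, rfl⟩
      rw [if_pos hmem2]
      rfl

variable (G ι) in
noncomputable def model (v₀ : V) (c : V → Fin 3) (hc : ∀ u v, G.Adj u v → c u ≠ c v) :
    SigGraph (sig G ι v₀) where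
  n := Fintype.card (Nd G ι)
  v0 := Fintype.equivFin (Nd G ι) (.inl v₀)
  edge x d := (edgeN G ι c hc ((Fintype.equivFin (Nd G ι)).symm x) d).map (Fintype.equivFin (Nd G ι))
  lab x := labN G ι c hc ((Fintype.equivFin (Nd G ι)).symm x)
  edge_sym := by
    intro x d u h
    rw [Option.map_eq_some_iff] at h
    obtain ⟨y, hy, rfl⟩ := h
    have h2 := edgeN_sym hy
    refine Option.map_eq_some_iff.mpr ⟨_, ?_, Equiv.apply_symm_apply _ _⟩
    rw [Equiv.symm_apply_apply]
    exact h2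
  edge_dom := by
    intro x d
    have h := edgeN_dom (c := c) (hc := hc) ((Fintype.equivFin (Nd G ι)).symm x) d
    show (Option.map (⇑(Fintype.equivFin (Nd G ι)))
        (edgeN G ι c hc ((Fintype.equivFin (Nd G ι)).symm x) d)).isSome ↔
      d ∈ Da G ι (labN G ι c hc ((Fintype.equivFin (Nd G ι)).symm x))
    rcases hE : edgeN G ι c hc ((Fintype.equivFin (Nd G ι)).symm x) d with _ | y <;>
      rw [hE] at h <;> exact h
  init_iff := by
    intro x
    show labN G ι c hc _ ∈ (sig G ι v₀).init ↔ _
    rw [mem_init]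
    rcases hx : (Fintype.equivFin (Nd G ι)).symm x with v | e
    · rw [labN]
      constructor
      · rintro ⟨a, ha⟩
        obtain ⟨rfl, -⟩ : v = v₀ ∧ c v = a := by simpa [Prod.ext_iff] using ha
        rw [← hx, Equiv.apply_symm_apply]
      · rintro rfl
        rw [Equiv.symm_apply_apply] at hx
        obtain rfl : v₀ = v := by injection hx
        exact ⟨c v₀, rfl⟩
    · rw [labN]
      simp only [reduceCtorEq, exists_false, false_iff]
      intro hh
      rw [hh, Equiv.symm_apply_apply] at hx
      exact absurd hx (by simp)


/-! ### From a graph over the signature to a colouring -/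

section Forward

variable {v₀ : V} (H : SigGraph (sig G ι v₀))

instance decLabInl (u : V) (x : Fin H.n) (a : Fin 3) :
    Decidable (H.lab x = (.inl (u, a) : Lab G ι)) :=
  instDecidableEqSum _ _

instance decLabInr (e : OE G ι) (x : Fin H.n) (p : CP) :
    Decidable (H.lab x = (.inr (e, p) : Lab G ι)) :=
  instDecidableEqSum _ _

def VS (u : V) : Finset (Fin H.n) :=
  univ.filter fun x => ∃ a : Fin 3, H.lab x = (.inl (u, a) : Lab G ι)

def ES (e : OE G ι) : Finset (Fin H.n) :=
  univ.filter fun x => ∃ p : CP, H.lab x = (.inr (e, p) : Lab G ι)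

def colOf (x : Fin H.n) : Fin 3 :=
  match (H.lab x : Lab G ι) with
  | .inl (_, a) => a
  | .inr _ => 0

def ecolOf (s : Bool) (x : Fin H.n) : Fin 3 :=
  match (H.lab x : Lab G ι) with
  | .inr (_, p) => scol p s
  | .inl _ => 0

lemma colOf_eq {x : Fin H.n} {u a} (h : H.lab x = (.inl (u, a) : Lab G ι)) :
    colOf H x = a := by
  simp [colOf, h]

lemma ecolOf_eq {x : Fin H.n} {e p} (s : Bool) (h : H.lab x = (.inr (e, p) : Lab G ι)) :
    ecolOf H s x = scol p s := by
  simp [ecolOf, h]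

lemma step1 {x : Fin H.n} {u a s} (hlab : H.lab x = (.inl (u, a) : Lab G ι)) (e : OE G ι)
    (hep : ep e s = u) :
    ∃ y, H.edge x (e, s, a, false) = some y ∧ ∃ p : CP,
      H.lab y = (.inr (e, p) : Lab G ι) ∧ a = scol p s ∧ H.edge y (e, s, a, true) = some x := by
  have hd : ((e, s, a, false) : Dir G ι) ∈ (sig G ι v₀).Da (H.lab x) := by
    rw [hlab]; exact mem_Da_inl.mpr ⟨rfl, rfl, hep⟩
  obtain ⟨y, hy⟩ := Option.isSome_iff_exists.mp ((H.edge_dom x _).mpr hd)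
  have hback : H.edge y (e, s, a, true) = some x := by simpa using H.edge_sym x _ y hy
  have hmem : ((e, s, a, true) : Dir G ι) ∈ Da G ι (H.lab y) :=
    (H.edge_dom y _).mp (by rw [hback]; rfl)
  obtain ⟨p, hp, hap⟩ := lab_of_mem_true hmem
  exact ⟨y, hy, p, hp, hap, hback⟩

lemma step2 {y : Fin H.n} {e p} (s : Bool) (hlab : H.lab y = (.inr (e, p) : Lab G ι)) :
    ∃ z, H.edge y (e, s, scol p s, true) = some z ∧
      H.lab z = (.inl (ep e s, scol p s) : Lab G ι) ∧
      H.edge z (e, s, scol p s, false) = some y := by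
  have hd : ((e, s, scol p s, true) : Dir G ι) ∈ (sig G ι v₀).Da (H.lab y) := by
    rw [hlab]; exact mem_Da_inr.mpr ⟨rfl, rfl, rfl⟩
  obtain ⟨z, hz⟩ := Option.isSome_iff_exists.mp ((H.edge_dom y _).mpr hd)
  have hback : H.edge z (e, s, scol p s, false) = some y := by
    simpa using H.edge_sym y _ z hz
  have hmem : ((e, s, scol p s, false) : Dir G ι) ∈ Da G ι (H.lab z) :=
    (H.edge_dom z _).mp (by rw [hback]; rfl)
  exact ⟨z, hz, lab_of_mem_false hmem, hback⟩

lemma card_VS_eq_ES {u s} (e : OE G ι) (hep : ep e s = u) :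
    (VS H u).card = (ES H e).card := by
  refine Finset.card_nbij' (fun x => (H.edge x (e, s, colOf H x, false)).getD x)
    (fun y => (H.edge y (e, s, ecolOf H s y, true)).getD y) ?_ ?_ ?_ ?_
  · intro x hx
    obtain ⟨-, a, ha⟩ := Finset.mem_filter.mp hx
    obtain ⟨y, hy, p, hp, -, -⟩ := step1 H ha e hep
    simp only [colOf_eq H ha, hy, Option.getD_some]
    exact Finset.mem_filter.mpr ⟨mem_univ _, p, hp⟩
  · intro y hy
    obtain ⟨-, p, hp⟩ := Finset.mem_filter.mp hy
    obtain ⟨z, hz, hzl, -⟩ := step2 H s hp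
    simp only [ecolOf_eq H s hp, hz, Option.getD_some]
    exact Finset.mem_filter.mpr ⟨mem_univ _, scol p s, by rw [hzl, hep]⟩
  · intro x hx
    obtain ⟨-, a, ha⟩ := Finset.mem_filter.mp hx
    obtain ⟨y, hy, p, hp, hap, hba⟩ := step1 H ha e hep
    simp only [colOf_eq H ha, hy, Option.getD_some]
    rw [ecolOf_eq H s hp, ← hap, hba, Option.getD_some]
  · intro y hy
    obtain ⟨-, p, hp⟩ := Finset.mem_filter.mp hy
    obtain ⟨z, hz, hzl, hzb⟩ := step2 H s hp
    simp only [ecolOf_eq H s hp, hz, Option.getD_some]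
    rw [colOf_eq H hzl, hzb, Option.getD_some]

lemma card_VS_adj {u w : V} (h : G.Adj u w) : (VS H u).card = (VS H w).card := by
  have hne : ι u ≠ ι w := fun hh => h.ne (ι.injective hh)
  rcases lt_or_gt_of_ne hne with hlt | hlt
  · rw [card_VS_eq_ES H (s := false) (⟨(u, w), h, hlt⟩ : OE G ι)
        (show ep (⟨(u, w), h, hlt⟩ : OE G ι) false = u from rfl),
      card_VS_eq_ES H (s := true) (⟨(u, w), h, hlt⟩ : OE G ι)
        (show ep (⟨(u, w), h, hlt⟩ : OE G ι) true = w from rfl)]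
  · rw [card_VS_eq_ES H (s := true) (⟨(w, u), h.symm, hlt⟩ : OE G ι)
        (show ep (⟨(w, u), h.symm, hlt⟩ : OE G ι) true = u from rfl),
      card_VS_eq_ES H (s := false) (⟨(w, u), h.symm, hlt⟩ : OE G ι)
        (show ep (⟨(w, u), h.symm, hlt⟩ : OE G ι) false = w from rfl)]

lemma card_VS_v0 : (VS H v₀).card = 1 := by
  have hv : VS H v₀ = {H.v0} := by
    ext x
    simp only [VS, Finset.mem_filter, mem_univ, true_and, Finset.mem_singleton]
    exact (mem_init (l := H.lab x)).symm.trans (H.init_iff x)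
  rw [hv, Finset.card_singleton]

lemma card_VS_one (hpre : G.Preconnected) (v : V) : (VS H v).card = 1 := by
  have hr := hpre v₀ v
  rw [SimpleGraph.reachable_iff_reflTransGen] at hr
  induction hr with
  | refl => exact card_VS_v0 H
  | tail _ hadj ih => rw [← card_VS_adj H hadj]; exact ih

lemma across {u w : V} {a : Fin 3} {s : Bool} (e : OE G ι) (hu : ep e s = u)
    (hw : ep e (!s) = w) {x : Fin H.n} (hlab : H.lab x = (.inl (u, a) : Lab G ι)) :
    ∃ (z : Fin H.n) (b : Fin 3), H.lab z = (.inl (w, b) : Lab G ι) ∧ b ≠ a := by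
  obtain ⟨y, -, p, hp, hap, -⟩ := step1 H hlab e hu
  obtain ⟨z, -, hzl, -⟩ := step2 H (!s) hp
  exact ⟨z, scol p (!s), by rw [hzl, hw], by rw [hap]; exact scol_ne p s⟩

end Forward

end Stmt13

/-- Reduction of 3-colourability to signature non-emptiness: for every finite connected
undirected graph `G = (V, E)` with at least one vertex, there is a signature `S_G` with
`3|V| + 6|E|` node labels and `12|E|` directions such that a graph over `S_G` exists
if and only if `G` has a proper 3-colouring. -/
theorem stmt13 (V : Type) [Fintype V] [DecidableEq V] (G : SimpleGraph V)
    [DecidableRel G.Adj] (hconn : G.Connected) :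
    ∃ S : Signature,
      Fintype.card S.Lab = 3 * Fintype.card V + 6 * G.edgeFinset.card ∧
      Fintype.card S.D = 12 * G.edgeFinset.card ∧
      (Nonempty (SigGraph S) ↔
        ∃ c : V → Fin 3, ∀ u v : V, G.Adj u v → c u ≠ c v) := by
  obtain ⟨v₀⟩ := hconn.nonempty
  refine ⟨Stmt13.sig G (Fintype.equivFin V) v₀, Stmt13.card_Lab v₀, Stmt13.card_D v₀, ?_, ?_⟩
  · rintro ⟨H⟩
    have hcard := Stmt13.card_VS_one H hconn.preconnected
    have hnd : ∀ v, ∃ x, Stmt13.VS H v = {x} := fun v => Finset.card_eq_one.mp (hcard v)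
    choose nd hnd using hnd
    have hlab : ∀ v, ∃ a : Fin 3,
        H.lab (nd v) = (Sum.inl (v, a) : Stmt13.Lab G (Fintype.equivFin V)) := by
      intro v
      have hm : nd v ∈ Stmt13.VS H v := by
        rw [hnd v]; exact Finset.mem_singleton_self _
      exact (Finset.mem_filter.mp hm).2
    choose col hcol using hlab
    refine ⟨col, ?_⟩
    intro u w hadj
    have key : ∃ (z : Fin H.n) (b : Fin 3),
        H.lab z = (Sum.inl (w, b) : Stmt13.Lab G (Fintype.equivFin V)) ∧ b ≠ col u := by
      have hne : (Fintype.equivFin V) u ≠ (Fintype.equivFin V) w :=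
        fun hh => hadj.ne ((Fintype.equivFin V).injective hh)
      rcases lt_or_gt_of_ne hne with hlt | hlt
      · exact Stmt13.across H (s := false) (⟨(u, w), hadj, hlt⟩) rfl rfl (hcol u)
      · exact Stmt13.across H (s := true) (⟨(w, u), hadj.symm, hlt⟩) rfl rfl (hcol u)
    obtain ⟨z, b, hz, hb⟩ := key
    have hzw : z ∈ Stmt13.VS H w := Finset.mem_filter.mpr ⟨Finset.mem_univ _, b, hz⟩
    rw [hnd w, Finset.mem_singleton] at hzw
    subst hzw
    rw [hcol w] at hz
    have hcb : col w = b := by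
      injection hz with h
      exact congrArg Prod.snd h
    intro hcontra
    exact hb (hcb.symm.trans hcontra.symm)
  · rintro ⟨c, hc⟩
    exact ⟨Stmt13.model G (Fintype.equivFin V) v₀ c hc⟩
end
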